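/- Let Φ(x) := (2π)^{−1/2}·∫_{−∞}^x exp(−t²/2) dt denote the standard normal cumulative distribution function. Let K ≥ 1, ρ > 0, and for j = 1,…,K let q_j > 0 with ∑_{j=1}^K q_j = 1 and γ̄_j > 0; define p̃_{a,j}(θ) := 1 − Φ((θ + 1/2 − γ̄_j)/√γ̄_j) and p̃_{1,j}(θ) := 1 − Φ((θ − 1/2 − γ̄_j)/√γ̄_j). Fix an index i and fix θ_j ∈ ℝ for all j ≠ i, and define f : ℝ → ℝ by f(θ_i) := (1 + ρ·∑_{j=1}^K q_j·p̃_{1,j}(θ_j)) / ((1+ρ)·(1 + ρ·∑_{j=1}^K q_j·p̃_{a,j}(θ_j))), regarded as a function of θ_i alone. Then for every θ_i ∈ ℝ, the derivative of f at θ_i is zero if and only if θ_i = γ̄_i·log( (1 + ρ·∑_{j=1}^K q_j·p̃_{1,j}(θ_j)) / (1 + ρ·∑_{j=1}^K q_j·p̃_{a,j}(θ_j)) ) + γ̄_i. -/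

import Mathlib

/-!
Only the `i`-th summands of the numerator `N` and denominator `D` of `f` depend on `θᵢ`, and their
derivatives are `-qᵢ` times the Gaussian densities at `(θᵢ ∓ 1/2 - γ̄ᵢ)/√γ̄ᵢ` (over `√γ̄ᵢ`). These two
densities differ exactly by the factor `exp ((θᵢ - γ̄ᵢ) / γ̄ᵢ)`, so the quotient rule gives
`f' = 0 ↔ exp ((θᵢ - γ̄ᵢ) / γ̄ᵢ) = N / D`, and `N, D ≥ 1` lets us take logarithms.
-/

open Real MeasureTheory

/-- The standard normal cumulative distribution function. -/
noncomputable def normCDF (x : ℝ) : ℝ :=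
  (2 * π) ^ (-(1 : ℝ) / 2) * ∫ t in Set.Iic x, Real.exp (-t ^ 2 / 2)

/-- Continuity-corrected normal approximation of the tier active probability. -/
noncomputable def pTildeA (γ θ : ℝ) : ℝ := 1 - normCDF ((θ + 1 / 2 - γ) / Real.sqrt γ)

/-- Continuity-corrected normal approximation of the tier nearest-connection probability. -/
noncomputable def pTildeOne (γ θ : ℝ) : ℝ := 1 - normCDF ((θ - 1 / 2 - γ) / Real.sqrt γ)

lemma hasDerivAt_integral_Iic {f : ℝ → ℝ} (hint : Integrable f) (hcont : Continuous f) (x : ℝ) :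
    HasDerivAt (fun u => ∫ t in Set.Iic u, f t) (f x) x := by
  have hsplit : ∀ u, ∫ t in Set.Iic u, f t = (∫ t in Set.Iic 0, f t) + ∫ t in (0 : ℝ)..u, f t :=
    fun u => by
      rw [← intervalIntegral.integral_Iic_sub_Iic hint.integrableOn hint.integrableOn]
      ring
  rw [funext hsplit]
  exact (intervalIntegral.integral_hasDerivAt_right hint.intervalIntegrable
    hcont.aestronglyMeasurable.stronglyMeasurableAtFilter hcont.continuousAt).const_add _

lemma integrable_exp_neg_sq_div_two : Integrable fun t : ℝ => exp (-t ^ 2 / 2) := by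
  simpa [neg_div, div_eq_inv_mul, mul_comm] using integrable_exp_neg_mul_sq (b := 1 / 2) (by norm_num)

lemma integral_exp_neg_sq_div_two : ∫ t : ℝ, exp (-t ^ 2 / 2) = √(2 * π) := by
  have := integral_gaussian (1 / 2)
  simp only [one_div, div_inv_eq_mul] at this
  simpa [neg_div, div_eq_inv_mul, mul_comm] using this

lemma hasDerivAt_normCDF (x : ℝ) :
    HasDerivAt normCDF ((2 * π) ^ (-(1 : ℝ) / 2) * exp (-x ^ 2 / 2)) x :=
  (hasDerivAt_integral_Iic integrable_exp_neg_sq_div_two (by fun_prop) x).const_mul _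

lemma normCDF_le_one (x : ℝ) : normCDF x ≤ 1 :=
  calc normCDF x ≤ (2 * π) ^ (-(1 : ℝ) / 2) * ∫ t : ℝ, exp (-t ^ 2 / 2) :=
        mul_le_mul_of_nonneg_left (setIntegral_le_integral integrable_exp_neg_sq_div_two
          (Filter.Eventually.of_forall fun t => (exp_pos _).le)) (by positivity)
    _ = 1 := by
        rw [integral_exp_neg_sq_div_two, sqrt_eq_rpow, ← rpow_add (by positivity)]
        norm_num

lemma hasDerivAt_one_sub_normCDF_comp {u : ℝ → ℝ} {u' x : ℝ} (hu : HasDerivAt u u' x) :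
    HasDerivAt (fun y => 1 - normCDF (u y))
      (-((2 * π) ^ (-(1 : ℝ) / 2) * exp (-u x ^ 2 / 2) * u')) x :=
  ((hasDerivAt_normCDF (u x)).comp x hu).const_sub 1

lemma pTildeA_nonneg (γ θ : ℝ) : 0 ≤ pTildeA γ θ :=
  sub_nonneg.2 (normCDF_le_one _)

lemma pTildeOne_nonneg (γ θ : ℝ) : 0 ≤ pTildeOne γ θ :=
  sub_nonneg.2 (normCDF_le_one _)

noncomputable def pTildeADeriv (γ θ : ℝ) : ℝ :=
  -((2 * π) ^ (-(1 : ℝ) / 2) * exp (-((θ + 1 / 2 - γ) / √γ) ^ 2 / 2) / √γ)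

lemma pTildeADeriv_ne_zero {γ : ℝ} (hγ : 0 < γ) (θ : ℝ) : pTildeADeriv γ θ ≠ 0 :=
  have := sqrt_pos.2 hγ
  neg_ne_zero.2 (by positivity)

lemma hasDerivAt_pTildeA (γ x : ℝ) : HasDerivAt (pTildeA γ) (pTildeADeriv γ x) x :=
  (hasDerivAt_one_sub_normCDF_comp
    ((((hasDerivAt_id' x).add_const _).sub_const _).div_const _)).congr_deriv
    (by rw [pTildeADeriv]; ring)

lemma exp_neg_sq_div_two_sub_half {γ : ℝ} (hγ : 0 < γ) (x : ℝ) :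
    exp (-((x - 1 / 2 - γ) / √γ) ^ 2 / 2) =
      exp (-((x + 1 / 2 - γ) / √γ) ^ 2 / 2) * exp ((x - γ) / γ) := by
  rw [← exp_add, div_pow, div_pow, sq_sqrt hγ.le]
  congr 1
  field_simp
  ring

lemma hasDerivAt_pTildeOne {γ : ℝ} (hγ : 0 < γ) (x : ℝ) :
    HasDerivAt (pTildeOne γ) (pTildeADeriv γ x * exp ((x - γ) / γ)) x :=
  (hasDerivAt_one_sub_normCDF_comp
    ((((hasDerivAt_id' x).sub_const _).sub_const _).div_const _)).congr_deriv
    (by rw [pTildeADeriv, exp_neg_sq_div_two_sub_half hγ]; ring)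

lemma exp_sub_div_eq_iff {γ r x : ℝ} (hγ : γ ≠ 0) (hr : 0 < r) :
    exp ((x - γ) / γ) = r ↔ x = γ * log r + γ := by
  rw [← exp_log hr, exp_eq_exp, log_exp, div_eq_iff hγ]
  constructor <;> intro h <;> linarith

lemma hasDerivAt_sum_update {ι : Type*} [Fintype ι] [DecidableEq ι] (g : ι → ℝ → ℝ)
    (θ : ι → ℝ) (i : ι) {x g' : ℝ} (h : HasDerivAt (g i) g' x) :
    HasDerivAt (fun y => ∑ j, g j (Function.update θ i y j)) g' x := by
  have hsplit : ∀ y, ∑ j, g j (Function.update θ i y j) =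
      g i y + ∑ j ∈ Finset.univ.erase i, g j (θ j) := fun y => by
    rw [← Finset.add_sum_erase _ _ (Finset.mem_univ i), Function.update_self]
    congr 1
    exact Finset.sum_congr rfl fun j hj => by
      rw [Function.update_of_ne (Finset.ne_of_mem_erase hj)]
  rw [funext hsplit]
  exact h.add_const _

lemma one_add_mul_sum_pos {ι : Type*} (s : Finset ι) {ρ : ℝ} (hρ : 0 ≤ ρ) {q p : ι → ℝ}
    (hq : ∀ j, 0 ≤ q j) (hp : ∀ j, 0 ≤ p j) : 0 < 1 + ρ * ∑ j ∈ s, q j * p j := by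
  have := mul_nonneg hρ (Finset.sum_nonneg fun j (_ : j ∈ s) => mul_nonneg (hq j) (hp j))
  linarith

lemma deriv_div_eq_zero_iff {f g : ℝ → ℝ} {f' g' x : ℝ} (hf : HasDerivAt f f' x)
    (hg : HasDerivAt g g' x) (hx : g x ≠ 0) :
    deriv (fun y => f y / g y) x = 0 ↔ f' * g x = f x * g' := by
  rw [(hf.fun_div hg hx).deriv, div_eq_zero_iff, sub_eq_zero]
  simp [hx]

theorem stmt_16_general (K : ℕ) (ρ : ℝ) (hρ : 0 < ρ)
    (q γbar : Fin K → ℝ)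
    (hq0 : ∀ j, 0 < q j)
    (hγ : ∀ j, 0 < γbar j)
    (i : Fin K) (θ : Fin K → ℝ) :
    ∀ x : ℝ,
      deriv (fun y : ℝ =>
          (1 + ρ * ∑ j, q j * pTildeOne (γbar j) (Function.update θ i y j)) /
            ((1 + ρ) *
              (1 + ρ * ∑ j, q j * pTildeA (γbar j) (Function.update θ i y j)))) x = 0 ↔
        x = γbar i *
              Real.log
                ((1 + ρ * ∑ j, q j * pTildeOne (γbar j) (Function.update θ i x j)) /
                  (1 + ρ * ∑ j, q j * pTildeA (γbar j) (Function.update θ i x j))) +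
            γbar i := by
  intro x
  have hN := one_add_mul_sum_pos Finset.univ hρ.le (fun j => (hq0 j).le)
    fun j => pTildeOne_nonneg (γbar j) (Function.update θ i x j)
  have hD := one_add_mul_sum_pos Finset.univ hρ.le (fun j => (hq0 j).le)
    fun j => pTildeA_nonneg (γbar j) (Function.update θ i x j)
  have hOne := hasDerivAt_sum_update (fun j t => q j * pTildeOne (γbar j) t) θ i
    ((hasDerivAt_pTildeOne (hγ i) x).const_mul (q i))
  have hA := hasDerivAt_sum_update (fun j t => q j * pTildeA (γbar j) t) θ i
    ((hasDerivAt_pTildeA (γbar i) x).const_mul (q i))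
  refine (deriv_div_eq_zero_iff ((hOne.const_mul ρ).const_add 1)
    (((hA.const_mul ρ).const_add 1).const_mul (1 + ρ)) (mul_ne_zero (by positivity) hD.ne')).trans ?_
  rw [← exp_sub_div_eq_iff (hγ i).ne' (div_pos hN hD), eq_div_iff hD.ne']
  have hk : ρ * (q i * pTildeADeriv (γbar i) x) * (1 + ρ) ≠ 0 :=
    mul_ne_zero (mul_ne_zero hρ.ne' (mul_ne_zero (hq0 i).ne' (pTildeADeriv_ne_zero (hγ i) x)))
      (by positivity)
  constructor
  · intro h
    exact mul_left_cancel₀ hk (by linear_combination h)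
  · intro h
    rw [← h]
    ring

theorem stmt_16 (K : ℕ) (hK : 1 ≤ K) (ρ : ℝ) (hρ : 0 < ρ)
    (q γbar : Fin K → ℝ)
    (hq0 : ∀ j, 0 < q j) (hq1 : ∑ j, q j = 1)
    (hγ : ∀ j, 0 < γbar j)
    (i : Fin K) (θ : Fin K → ℝ) :
    ∀ x : ℝ,
      deriv (fun y : ℝ =>
          (1 + ρ * ∑ j, q j * pTildeOne (γbar j) (Function.update θ i y j)) /
            ((1 + ρ) *
              (1 + ρ * ∑ j, q j * pTildeA (γbar j) (Function.update θ i y j)))) x = 0 ↔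
        x = γbar i *
              Real.log
                ((1 + ρ * ∑ j, q j * pTildeOne (γbar j) (Function.update θ i x j)) /
                  (1 + ρ * ∑ j, q j * pTildeA (γbar j) (Function.update θ i x j))) +
            γbar i :=
  stmt_16_general K ρ hρ q γbar hq0 hγ i θ
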